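/- For the balloon graph G_k (k ≥ 2), consisting of k disjoint 5-cycles and one extra vertex adjacent to exactly one vertex of each 5-cycle, one has μ(D(G_k)) − (n(G_k) + μ_t(G_k)) ≥ k − 1; equivalently μ(D(G_k)) ≥ 6k, since n(G_k) = 5k+1 and μ_t(G_k) = 0. -/

import Mathlib

open SimpleGraph

variable {V : Type*}

/-- A walk is a shortest path if it is a path and its length equals the distance
between its endpoints. -/
def SimpleGraph.IsShortestPath (G : SimpleGraph V) {u v : V} (p : G.Walk u v) : Prop :=
  p.IsPath ∧ p.length = G.dist u v

/-- `S` is a general position set: no three vertices of `S` lie on a common shortest path. -/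
def SimpleGraph.IsGPSet (G : SimpleGraph V) (S : Set V) : Prop :=
  ∀ ⦃u v : V⦄ (p : G.Walk u v), G.IsShortestPath p →
    ∀ x ∈ S, ∀ y ∈ S, ∀ z ∈ S, x ≠ y → x ≠ z → y ≠ z →
      ¬ (x ∈ p.support ∧ y ∈ p.support ∧ z ∈ p.support)

/-- `u` and `v` are `S`-visible: some shortest `u,v`-path has no internal vertex in `S`. -/
def SimpleGraph.SVisible (G : SimpleGraph V) (S : Set V) (u v : V) : Prop :=
  ∃ p : G.Walk u v, G.IsShortestPath p ∧ ∀ w ∈ p.support, w ≠ u → w ≠ v → w ∉ S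

/-- `S` is a mutual-visibility set. -/
def SimpleGraph.IsMVSet (G : SimpleGraph V) (S : Set V) : Prop :=
  ∀ u ∈ S, ∀ v ∈ S, u ≠ v → G.SVisible S u v

/-- `S` is a total mutual-visibility set. -/
def SimpleGraph.IsTotalMVSet (G : SimpleGraph V) (S : Set V) : Prop :=
  ∀ u v : V, u ≠ v → G.SVisible S u v

/-- `S` is an outer mutual-visibility set. -/
def SimpleGraph.IsOuterMVSet (G : SimpleGraph V) (S : Set V) : Prop :=
  G.IsMVSet S ∧ ∀ u ∈ S, ∀ v ∉ S, u ≠ v → G.SVisible S u v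

/-- The mutual-visibility number `μ(G)`. -/
noncomputable def SimpleGraph.mutualVisibilityNumber (G : SimpleGraph V) [Fintype V] : ℕ :=
  sSup {k | ∃ S : Finset V, G.IsMVSet ↑S ∧ S.card = k}

/-- The total mutual-visibility number `μ_t(G)`. -/
noncomputable def SimpleGraph.totalMutualVisibilityNumber (G : SimpleGraph V) [Fintype V] : ℕ :=
  sSup {k | ∃ S : Finset V, G.IsTotalMVSet ↑S ∧ S.card = k}

/-- The outer mutual-visibility number `μ_o(G)`. -/
noncomputable def SimpleGraph.outerMutualVisibilityNumber (G : SimpleGraph V) [Fintype V] : ℕ :=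
  sSup {k | ∃ S : Finset V, G.IsOuterMVSet ↑S ∧ S.card = k}

/-- The general position number `gp(G)`. -/
noncomputable def SimpleGraph.gpNumber (G : SimpleGraph V) [Fintype V] : ℕ :=
  sSup {k | ∃ S : Finset V, G.IsGPSet ↑S ∧ S.card = k}

/-- The double graph `D(G)`: two copies of each vertex, `(u, b)` adjacent to `(v, c)`
iff `u` adjacent to `v` in `G`. -/
def SimpleGraph.doubleGraph (G : SimpleGraph V) : SimpleGraph (V × Bool) where
  Adj x y := G.Adj x.1 y.1
  symm := ⟨fun _ _ h => G.adj_symm h⟩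
  loopless := ⟨fun _ h => G.irrefl h⟩

/-- The Mycielskian `M(G)`: `some (u, false)` are the original vertices, `some (u, true)`
their copies, and `none` is the apex vertex `v*`. -/
def SimpleGraph.mycielskian (G : SimpleGraph V) : SimpleGraph (Option (V × Bool)) where
  Adj x y := match x, y with
    | some (u, false), some (v, false) => G.Adj u v
    | some (u, false), some (v, true) => G.Adj u v
    | some (u, true), some (v, false) => G.Adj u v
    | some (_, true), none => True
    | none, some (_, true) => True
    | _, _ => False
  symm := by
    constructor
    rintro (_ | ⟨u, (_|_)⟩) (_ | ⟨v, (_|_)⟩) h <;>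
      first
        | exact h
        | exact G.adj_symm h
  loopless := by
    constructor
    rintro (_ | ⟨u, (_|_)⟩) h
    · exact h
    · exact G.irrefl h
    · exact h


/-- The balloon graph `G_k`: `k` disjoint 5-cycles plus a hub vertex (`none`) adjacent to
exactly one vertex (the one with second coordinate `0`) of each 5-cycle. -/
def balloonGraph (k : ℕ) : SimpleGraph (Option (Fin k × ZMod 5)) where
  Adj x y := match x, y with
    | some (i, a), some (j, b) => i = j ∧ (a - b = 1 ∨ b - a = 1)
    | some (_, a), none => a = 0
    | none, some (_, a) => a = 0
    | none, none => False
  symm := by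
    constructor
    rintro (_ | ⟨i, a⟩) (_ | ⟨j, b⟩) h
    · exact h
    · exact h
    · exact h
    · exact ⟨h.1.symm, h.2.symm⟩
  loopless := by
    constructor
    rintro (_ | ⟨i, a⟩) h
    · exact h
    · rcases h.2 with h' | h' <;> rw [sub_self] at h' <;> exact (by decide : (0 : ZMod 5) ≠ 1) h'

/-!
Every vertex `w` of `G_k` is the only common neighbour of two non-adjacent vertices (the two
cycle-neighbours of a cycle vertex; two hub-neighbours on different cycles for the hub, which needs
`k ≥ 2`), so every shortest path between them passes through `w`: no nonempty set is a total
mutual-visibility set, and `μ_t(G_k) = 0`.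

In `D(G_k)` take, on every cycle, the vertices `0, 4` in one layer and `1, 3` in both layers, `6k`
vertices in all. Walks of `G` lift to walks of `D(G)` of the same length with any choice of
layers, and projecting shows the lifts of shortest paths are shortest. Two chosen vertices over
different vertices of `G_k` see each other along a lifted shortest path of `G_k` whose interior
avoids `1, 3` (on the same cycle a path of length at most two, otherwise the route through the
hub), with its interior in the other layer; the two copies of `1` (or `3`) see each other through
a copy of `2`.
-/

namespace SimpleGraph

variable {G : SimpleGraph V} {u v w : V} {S : Set V}

theorem Walk.sub_le_length_of_lipschitz (f : V → ℤ) (hf : ∀ x y, G.Adj x y → f y ≤ f x + 1)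
    (p : G.Walk u v) : f v - f u ≤ p.length := by
  induction p with
  | nil => simp
  | cons h p ih =>
    have := hf _ _ h
    rw [Walk.length_cons]
    omega

theorem Reachable.sub_le_dist_of_lipschitz (f : V → ℤ) (hf : ∀ x y, G.Adj x y → f y ≤ f x + 1)
    (h : G.Reachable u v) : f v - f u ≤ G.dist u v := by
  obtain ⟨p, hp⟩ := h.exists_walk_length_eq_dist
  exact hp ▸ p.sub_le_length_of_lipschitz f hf

theorem sVisible_of_length_le_dist (p : G.Walk u v) (hp : p.length ≤ G.dist u v)
    (hS : ∀ x ∈ p.support, x ≠ u → x ≠ v → x ∉ S) : G.SVisible S u v := by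
  have hlen := le_antisymm hp (G.dist_le p)
  exact ⟨p, ⟨p.isPath_of_length_eq_dist hlen, hlen⟩, hS⟩

theorem Adj.sVisible (h : G.Adj u v) : G.SVisible S u v :=
  sVisible_of_length_le_dist h.toWalk (by simp [dist_eq_one_iff_adj.mpr h])
    (by simp +contextual)

theorem sVisible_of_adj_of_adj (hne : u ≠ v) (hnadj : ¬G.Adj u v) (hu : G.Adj u w)
    (hv : G.Adj w v) (hw : w ∉ S) : G.SVisible S u v := by
  let p := Walk.cons hu hv.toWalk
  refine sVisible_of_length_le_dist p ?_ ?_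
  · exact p.reachable.one_lt_dist_of_ne_of_not_adj hne hnadj
  · intro x hx hxu hxv
    obtain rfl | rfl | rfl : x = u ∨ x = w ∨ x = v := by simpa [p] using hx
    exacts [absurd rfl hxu, hw, absurd rfl hxv]

theorem notMem_of_isTotalMVSet (hS : G.IsTotalMVSet S) (hne : u ≠ v) (hnadj : ¬G.Adj u v)
    (hu : G.Adj u w) (hv : G.Adj w v) (huniq : ∀ m, G.Adj u m → G.Adj m v → m = w) :
    w ∉ S := by
  obtain ⟨p, ⟨-, hlen⟩, hp⟩ := hS u v hne
  have h2 : p.length = 2 := by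
    have hle := G.dist_le (.cons hu (.cons hv .nil))
    have hlt := p.reachable.one_lt_dist_of_ne_of_not_adj hne hnadj
    simp only [Walk.length_cons, Walk.length_nil] at hle
    omega
  have hmid : p.getVert 1 = w :=
    huniq _ (by simpa using p.adj_getVert_succ (i := 0) (by omega))
      (by simpa [← h2] using p.adj_getVert_succ (i := 1) (by omega))
  exact hmid ▸ hp _ (p.getVert_mem_support 1) (hmid ▸ hu.ne.symm) (hmid ▸ hv.ne)

theorem totalMutualVisibilityNumber_eq_zero_of_forall [Fintype V]
    (h : ∀ w, ∃ u v, u ≠ v ∧ ¬G.Adj u v ∧ G.Adj u w ∧ G.Adj w v ∧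
      ∀ m, G.Adj u m → G.Adj m v → m = w) :
    G.totalMutualVisibilityNumber = 0 := by
  refine Nat.eq_zero_of_le_zero (csSup_le' ?_)
  rintro _ ⟨S, hS, rfl⟩
  rw [Nat.le_zero, Finset.card_eq_zero, Finset.eq_empty_iff_forall_notMem]
  intro w hw
  obtain ⟨u, v, hne, hnadj, hu, hv, huniq⟩ := h w
  exact notMem_of_isTotalMVSet hS hne hnadj hu hv huniq hw

theorem card_le_mutualVisibilityNumber [Fintype V] {S : Finset V} (hS : G.IsMVSet ↑S) :
    S.card ≤ G.mutualVisibilityNumber :=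
  le_csSup ⟨Fintype.card V, by rintro _ ⟨T, -, rfl⟩; exact T.card_le_univ⟩ ⟨S, hS, rfl⟩

@[simp]
theorem doubleGraph_adj {x y : V × Bool} : G.doubleGraph.Adj x y ↔ G.Adj x.1 y.1 :=
  Iff.rfl

def doubleGraph.fstHom (G : SimpleGraph V) : G.doubleGraph →g G :=
  ⟨Prod.fst, id⟩

def doubleGraph.layerHom (G : SimpleGraph V) (σ : V → Bool) : G →g G.doubleGraph :=
  ⟨fun x => (x, σ x), id⟩

theorem dist_le_dist_doubleGraph {x y : V × Bool} (h : G.doubleGraph.Reachable x y) :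
    G.dist x.1 y.1 ≤ G.doubleGraph.dist x y := by
  obtain ⟨p, hp⟩ := h.exists_walk_length_eq_dist
  have := G.dist_le (p.map (doubleGraph.fstHom G))
  rwa [Walk.length_map, hp] at this

theorem SVisible.doubleGraph_layer {F : Set V} {S : Set (V × Bool)} (h : G.SVisible F u v)
    (σ : V → Bool) (hσ : ∀ x ∉ F, x ≠ u → x ≠ v → (x, σ x) ∉ S) :
    G.doubleGraph.SVisible S (u, σ u) (v, σ v) := by
  obtain ⟨p, ⟨-, hlen⟩, hp⟩ := h
  let q : G.doubleGraph.Walk (u, σ u) (v, σ v) := p.map (doubleGraph.layerHom G σ)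
  have hq_length : q.length = p.length := Walk.length_map _ _
  have hq_support : q.support = p.support.map fun x => (x, σ x) := Walk.support_map _ _
  refine sVisible_of_length_le_dist q ?_ ?_
  · simpa [hq_length, hlen] using dist_le_dist_doubleGraph q.reachable
  · simp only [hq_support, List.mem_map]
    rintro _ ⟨x, hx, rfl⟩ hxσu hxσv
    have hxu : x ≠ u := by rintro rfl; exact hxσu rfl
    have hxv : x ≠ v := by rintro rfl; exact hxσv rfl
    exact hσ x (hp x hx hxu hxv) hxu hxv

theorem SVisible.doubleGraph {F : Set V} {S : Set (V × Bool)} (h : G.SVisible F u v)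
    (hne : u ≠ v) (hS : ∀ x ∉ F, (x, true) ∉ S) (b c : Bool) :
    G.doubleGraph.SVisible S (u, b) (v, c) := by
  classical
  let σ : V → Bool := fun x => if x = u then b else if x = v then c else true
  have hσ := h.doubleGraph_layer σ fun x hx hxu hxv => by simpa [σ, hxu, hxv] using hS x hx
  simpa [σ, hne.symm] using hσ

theorem isMVSet_doubleGraph {T F : Set V} (hFT : F ⊆ T)
    (hvis : ∀ u ∈ T, ∀ v ∈ T, u ≠ v → G.SVisible F u v)
    (hF : ∀ u ∈ F, ∃ w, G.Adj u w ∧ w ∉ F) :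
    G.doubleGraph.IsMVSet (T ×ˢ {false} ∪ F ×ˢ {true}) := by
  have hT : ∀ x b, (x, b) ∈ T ×ˢ {false} ∪ F ×ˢ {true} → x ∈ T := by
    rintro x b (⟨hx, -⟩ | ⟨hx, -⟩)
    exacts [hx, hFT hx]
  rintro ⟨u, b⟩ hu ⟨v, c⟩ hv hne
  by_cases huv : u = v
  · subst huv
    have huF : u ∈ F := by
      obtain rfl | rfl := b <;> obtain rfl | rfl := c <;> simp_all
    obtain ⟨w, huw, hw⟩ := hF u huF
    exact sVisible_of_adj_of_adj hne (G.loopless.irrefl u) (w := (w, true)) huw huw.symm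
      (by simpa using hw)
  · exact (hvis u (hT u b hu) v (hT v c hv) huv).doubleGraph huv (by simp) b c

theorem card_add_card_le_mutualVisibilityNumber_doubleGraph [Fintype V] [DecidableEq V]
    {T F : Finset V} (hFT : F ⊆ T) (hvis : ∀ u ∈ T, ∀ v ∈ T, u ≠ v → G.SVisible F u v)
    (hF : ∀ u ∈ F, ∃ w, G.Adj u w ∧ w ∉ F) :
    T.card + F.card ≤ G.doubleGraph.mutualVisibilityNumber := by
  have hS := isMVSet_doubleGraph (Finset.coe_subset.mpr hFT) hvis hF
  calc T.card + F.card = (T ×ˢ {false} ∪ F ×ˢ {true}).card := by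
        rw [Finset.card_union_of_disjoint (by simp [Finset.disjoint_left]),
          Finset.card_product, Finset.card_product]
        simp
    _ ≤ G.doubleGraph.mutualVisibilityNumber :=
        card_le_mutualVisibilityNumber (by push_cast; exact hS)

end SimpleGraph

namespace balloonGraph

variable {k : ℕ}

abbrev CycleAdj (a b : ZMod 5) : Prop :=
  a - b = 1 ∨ b - a = 1

@[simp]
theorem adj_some_some {i j : Fin k} {a b : ZMod 5} :
    (balloonGraph k).Adj (some (i, a)) (some (j, b)) ↔ i = j ∧ CycleAdj a b :=
  Iff.rfl

@[simp]
theorem adj_some_none {i : Fin k} {a : ZMod 5} :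
    (balloonGraph k).Adj (some (i, a)) none ↔ a = 0 :=
  Iff.rfl

@[simp]
theorem adj_none_some {i : Fin k} {a : ZMod 5} :
    (balloonGraph k).Adj none (some (i, a)) ↔ a = 0 :=
  Iff.rfl

theorem totalMutualVisibilityNumber_eq_zero (hk : 2 ≤ k) :
    (balloonGraph k).totalMutualVisibilityNumber = 0 := by
  refine SimpleGraph.totalMutualVisibilityNumber_eq_zero_of_forall ?_
  rintro (_ | ⟨i, a⟩)
  · let i₀ : Fin k := ⟨0, by omega⟩
    let i₁ : Fin k := ⟨1, by omega⟩
    have h₀₁ : i₀ ≠ i₁ := by simp [i₀, i₁, Fin.ext_iff]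
    refine ⟨some (i₀, 0), some (i₁, 0), by simp [h₀₁], by simp [h₀₁], rfl, rfl, ?_⟩
    rintro (_ | ⟨l, c⟩) hu hv
    · rfl
    · exact absurd (hu.1.trans hv.1) h₀₁
  · have key : ∀ a : ZMod 5, a - 1 ≠ a + 1 ∧ ¬CycleAdj (a - 1) (a + 1) ∧
        CycleAdj (a - 1) a ∧ CycleAdj a (a + 1) ∧ ¬(a - 1 = 0 ∧ a + 1 = 0) ∧
        ∀ c, CycleAdj (a - 1) c → CycleAdj c (a + 1) → c = a := by
      decide
    obtain ⟨hne, hnadj, hu, hv, hhub, huniq⟩ := key a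
    refine ⟨some (i, a - 1), some (i, a + 1), by simpa using hne, by simpa using hnadj,
      by simp [hu], by simp [hv], ?_⟩
    rintro (_ | ⟨l, c⟩) h₁ h₂
    · exact absurd ⟨h₁, h₂⟩ hhub
    · obtain rfl := h₁.1
      rw [huniq c h₁.2 h₂.2]

def cycleVertices (k : ℕ) (A : Finset (ZMod 5)) : Finset (Option (Fin k × ZMod 5)) :=
  (Finset.univ ×ˢ A).map .some

@[simp]
theorem some_mem_cycleVertices {A : Finset (ZMod 5)} {i : Fin k} {a : ZMod 5} :
    some (i, a) ∈ cycleVertices k A ↔ a ∈ A := by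
  simp [cycleVertices]

@[simp]
theorem none_notMem_cycleVertices {A : Finset (ZMod 5)} : none ∉ cycleVertices k A := by
  simp [cycleVertices]

theorem card_cycleVertices (A : Finset (ZMod 5)) : (cycleVertices k A).card = k * A.card := by
  simp [cycleVertices]

theorem cycleVertices_mono {A B : Finset (ZMod 5)} (h : A ⊆ B) :
    cycleVertices k A ⊆ cycleVertices k B :=
  Finset.map_subset_map.mpr (Finset.product_subset_product_right h)

def depth (a : ZMod 5) : ℕ :=
  min a.val (5 - a.val)

-- A 1-Lipschitz potential whose rise from cycle `i` to another cycle is the length of the route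
-- through the hub; it certifies that this route is a shortest path.
def signedDepth (i : Fin k) : Option (Fin k × ZMod 5) → ℤ
  | none => 0
  | some (l, a) => if l = i then -(depth a + 1 : ℤ) else depth a + 1

theorem signedDepth_le_add_one_of_adj (i : Fin k) :
    ∀ x y, (balloonGraph k).Adj x y → signedDepth i y ≤ signedDepth i x + 1 := by
  have hdepth : ∀ a b : ZMod 5, CycleAdj a b →
      depth b ≤ depth a + 1 ∧ depth a ≤ depth b + 1 := by
    decide
  have hdepth₀ : depth 0 = 0 := rfl
  rintro (_ | ⟨l, a⟩) (_ | ⟨m, b⟩) h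
  · exact h.elim
  · rw [adj_none_some] at h
    subst h
    simp only [signedDepth, hdepth₀]
    split_ifs <;> omega
  · rw [adj_some_none] at h
    subst h
    simp only [signedDepth, hdepth₀]
    split_ifs <;> omega
  · obtain ⟨rfl, h⟩ := h
    have := hdepth a b h
    simp only [signedDepth]
    split_ifs <;> omega

theorem exists_walk_to_hub (i : Fin k) {a : ZMod 5} (ha : a ∈ ({0, 1, 3, 4} : Finset (ZMod 5))) :
    ∃ p : (balloonGraph k).Walk (some (i, a)) none, p.length = depth a + 1 ∧
      ∀ x ∈ p.support, x ≠ some (i, a) → x ∉ cycleVertices k {1, 3} := by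
  have h₀ : (balloonGraph k).Adj (some (i, 0)) none := rfl
  have h₄ : (balloonGraph k).Adj (some (i, 4)) (some (i, 0)) := ⟨rfl, by decide⟩
  simp only [Finset.mem_insert, Finset.mem_singleton] at ha
  rcases ha with rfl | rfl | rfl | rfl
  · exact ⟨.cons h₀ .nil, rfl, by simp⟩
  · have h₁ : (balloonGraph k).Adj (some (i, 1)) (some (i, 0)) := ⟨rfl, by decide⟩
    exact ⟨.cons h₁ (.cons h₀ .nil), rfl, by simp; decide⟩
  · have h₃ : (balloonGraph k).Adj (some (i, 3)) (some (i, 4)) := ⟨rfl, by decide⟩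
    exact ⟨.cons h₃ (.cons h₄ (.cons h₀ .nil)), rfl, by simp; decide⟩
  · exact ⟨.cons h₄ (.cons h₀ .nil), rfl, by simp; decide⟩

theorem sVisible_of_ne {i j : Fin k} (hij : i ≠ j) {a c : ZMod 5}
    (ha : a ∈ ({0, 1, 3, 4} : Finset (ZMod 5))) (hc : c ∈ ({0, 1, 3, 4} : Finset (ZMod 5))) :
    (balloonGraph k).SVisible ↑(cycleVertices k {1, 3}) (some (i, a)) (some (j, c)) := by
  obtain ⟨p, hp, hpF⟩ := exists_walk_to_hub i ha
  obtain ⟨q, hq, hqF⟩ := exists_walk_to_hub j hc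
  refine sVisible_of_length_le_dist (p.append q.reverse) ?_ ?_
  · have := (p.append q.reverse).reachable.sub_le_dist_of_lipschitz (signedDepth i)
      (signedDepth_le_add_one_of_adj i)
    simp only [signedDepth, if_pos, Ne.symm hij, if_false] at this
    rw [Walk.length_append, Walk.length_reverse, hp, hq]
    omega
  · intro x hx hxu hxv
    rw [Walk.mem_support_append_iff, Walk.support_reverse, List.mem_reverse] at hx
    rcases hx with hx | hx
    exacts [hpF x hx hxu, hqF x hx hxv]

theorem sVisible_same_cycle (i : Fin k) {a c : ZMod 5} (hac : a ≠ c)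
    (ha : a ∈ ({0, 1, 3, 4} : Finset (ZMod 5))) (hc : c ∈ ({0, 1, 3, 4} : Finset (ZMod 5))) :
    (balloonGraph k).SVisible ↑(cycleVertices k {1, 3}) (some (i, a)) (some (i, c)) := by
  have key : ∀ a ∈ ({0, 1, 3, 4} : Finset (ZMod 5)), ∀ c ∈ ({0, 1, 3, 4} : Finset (ZMod 5)),
      a ≠ c → CycleAdj a c ∨ ¬CycleAdj a c ∧
        ∃ m ∉ ({1, 3} : Finset (ZMod 5)), CycleAdj a m ∧ CycleAdj m c := by
    decide
  rcases key a ha c hc hac with hadj | ⟨hnadj, m, hm, ham, hmc⟩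
  · exact Adj.sVisible ⟨rfl, hadj⟩
  · exact sVisible_of_adj_of_adj (by simpa using hac) (fun h => hnadj h.2) (w := some (i, m))
      ⟨rfl, ham⟩ ⟨rfl, hmc⟩ (by simpa using hm)

theorem sVisible_of_mem_cycleVertices :
    ∀ u ∈ cycleVertices k {0, 1, 3, 4}, ∀ v ∈ cycleVertices k {0, 1, 3, 4}, u ≠ v →
      (balloonGraph k).SVisible ↑(cycleVertices k {1, 3}) u v := by
  rintro (_ | ⟨i, a⟩) hu (_ | ⟨j, c⟩) hv huv
  · simp at hu
  · simp at hu
  · simp at hv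
  rw [some_mem_cycleVertices] at hu hv
  by_cases hij : i = j
  · subst hij
    exact sVisible_same_cycle i (by simpa using huv) hu hv
  · exact sVisible_of_ne hij hu hv

theorem exists_adj_notMem_cycleVertices :
    ∀ u ∈ cycleVertices k {1, 3},
      ∃ w, (balloonGraph k).Adj u w ∧ w ∉ cycleVertices k {1, 3} := by
  rintro (_ | ⟨i, a⟩) hu
  · simp at hu
  rw [some_mem_cycleVertices] at hu
  refine ⟨some (i, 2), ⟨rfl, ?_⟩, by simp; decide⟩
  simp only [Finset.mem_insert, Finset.mem_singleton] at hu
  rcases hu with rfl | rfl <;> decide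

end balloonGraph

theorem mu_double_balloon (k : ℕ) (hk : 2 ≤ k) :
    Fintype.card (Option (Fin k × ZMod 5)) = 5 * k + 1 ∧
    (balloonGraph k).totalMutualVisibilityNumber = 0 ∧
    6 * k ≤ (balloonGraph k).doubleGraph.mutualVisibilityNumber := by
  refine ⟨by simp [mul_comm], balloonGraph.totalMutualVisibilityNumber_eq_zero hk, ?_⟩
  calc 6 * k = (balloonGraph.cycleVertices k {0, 1, 3, 4}).card +
        (balloonGraph.cycleVertices k {1, 3}).card := by
        simp only [balloonGraph.card_cycleVertices]
        rw [(by decide : ({0, 1, 3, 4} : Finset (ZMod 5)).card = 4),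
          (by decide : ({1, 3} : Finset (ZMod 5)).card = 2)]
        ring
    _ ≤ (balloonGraph k).doubleGraph.mutualVisibilityNumber :=
        card_add_card_le_mutualVisibilityNumber_doubleGraph
          (balloonGraph.cycleVertices_mono (by decide))
          balloonGraph.sVisible_of_mem_cycleVertices
          balloonGraph.exists_adj_notMem_cycleVertices
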